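/- For all π ∈ S_n' and all 2 ≤ i ≤ met(π), the sequence C_{π,i} occurs as a subsequence of the sequence (max(b_{π,i-1,j}))_{j=1}^{|C_{π,i-1}|} of block maxima at step i−1. -/

import Mathlib

noncomputable section
theorem foldrMaxMem (x : ℕ) (xs : List ℕ) : (x :: xs).foldr max 0 ∈ x :: xs := by
  induction xs generalizing x with
  | nil => simp
  | cons y ys ih =>
    rcases max_choice x ((y :: ys).foldr max 0) with h | h
    · simp only [List.foldr_cons] at h ⊢
      rw [h]; exact List.mem_cons_self
    · simp only [List.foldr_cons] at h ⊢
      rw [h]; exact List.mem_cons_of_mem _ (ih y)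
theorem takeWhileLt (l : List ℕ) (m : ℕ) (hm : m ∈ l) :
    (l.takeWhile (fun y => y ≠ m)).length < l.length := by
  have hd : l.dropWhile (fun y => y ≠ m) ≠ [] := by
    intro h; rw [List.dropWhile_eq_nil_iff] at h; simpa using h m hm
  have h1 : (l.takeWhile (fun y => y ≠ m)).length
      + (l.dropWhile (fun y => y ≠ m)).length = l.length := by
    rw [← List.length_append, List.takeWhile_append_dropWhile]
  have h2 : 0 < (l.dropWhile (fun y => y ≠ m)).length := List.length_pos_iff.mpr hd
  omega
theorem dropWhileDropLt (l : List ℕ) (m : ℕ) (hl : l ≠ []) :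
    ((l.dropWhile (fun y => y ≠ m)).drop 1).length < l.length := by
  have h1 : (l.takeWhile (fun y => y ≠ m)).length
      + (l.dropWhile (fun y => y ≠ m)).length = l.length := by
    rw [← List.length_append, List.takeWhile_append_dropWhile]
  have h2 : 0 < l.length := List.length_pos_iff.mpr hl
  rw [List.length_drop]; omega

/-- West's stack-sorting map `s`: `s([]) = []`, `s(L m R) = s(L) s(R) m` for `m` the maximum. -/
def ss : List ℕ → List ℕ
  | [] => []
  | x :: xs =>
    ss ((x :: xs).takeWhile (fun y => y ≠ (x :: xs).foldr max 0)) ++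
    ss (((x :: xs).dropWhile (fun y => y ≠ (x :: xs).foldr max 0)).drop 1) ++
    [(x :: xs).foldr max 0]
termination_by l => l.length
decreasing_by
  · exact takeWhileLt _ _ (foldrMaxMem _ _)
  · exact dropWhileDropLt _ _ (by simp)

/-- `met π` : the least `k ≥ 0` with `s^k(π)` increasing. -/
def met (l : List ℕ) : ℕ := sInf {k | List.Pairwise (· < ·) (ss^[k] l)}

/-- Right-to-left maxima of a list, read from left to right.  For the prefix of `s^{i-1}(π)`
before `0` this is exactly the column sequence `C_{π,i}`. -/
def rtlMax : List ℕ → List ℕ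
  | [] => []
  | x :: xs => if ∀ y ∈ xs, y < x then x :: rtlMax xs else rtlMax xs

/-- The blocks `b_{π,i,j}`: the segments strictly between consecutive right-to-left maxima. -/
def blocksOf : List ℕ → List (List ℕ)
  | [] => []
  | x :: xs =>
    if ∀ y ∈ xs, y < x then [] :: blocksOf xs
    else
      match blocksOf xs with
      | [] => [[x]]
      | b :: bs => (x :: b) :: bs

/-- The part of `s^{i-1}(π)` strictly before the entry `0`. -/
def prefixAt (π : List ℕ) (i : ℕ) : List ℕ := (ss^[i-1] π).takeWhile (fun x => x ≠ 0)

/-- The column sequence `C_{π,i}`. -/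
def colSeqAt (π : List ℕ) (i : ℕ) : List ℕ := rtlMax (prefixAt π i)

/-- The block sequence `B_{π,i}`. -/
def blocksAt (π : List ℕ) (i : ℕ) : List (List ℕ) := blocksOf (prefixAt π i)

/-- `col_π(v)`: the unique `i` with `v ∈ C_{π,i}` (as the least such `i ≥ 1`). -/
def colOf (π : List ℕ) (v : ℕ) : ℕ := sInf {i | 1 ≤ i ∧ v ∈ colSeqAt π i}

/-- `colpos_π(v)`: the (1-indexed) position of `v` in `C_{π,col_π(v)}`. -/
def colposOf (π : List ℕ) (v : ℕ) : ℕ := (colSeqAt π (colOf π v)).idxOf v + 1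

/-- `leftof_π(v) = c_{π,col_π(v)-1,j}` for the unique `j` with `v = max(b_{π,col_π(v)-1,j})`. -/
def leftOf (π : List ℕ) (v : ℕ) : ℕ :=
  (colSeqAt π (colOf π v - 1)).getD
    (((blocksAt π (colOf π v - 1)).map (fun b => b.foldr max 0)).idxOf v) 0

/-- `row_π(v)`: follow `leftof` back to column 1 and take `colpos` there. -/
def rowOf (π : List ℕ) (v : ℕ) : ℕ := colposOf π ((leftOf π)^[colOf π v - 1] v)

/-- `upof_π(v) = c_{π,col_π(v),colpos_π(v)-1}`. -/
def upOf (π : List ℕ) (v : ℕ) : ℕ := (colSeqAt π (colOf π v)).getD (colposOf π v - 2) 0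

/-- The stack-sorting tableau `T_π(v) = (col_π(v), row_π(v))`. -/
def Tmap (π : List ℕ) (v : ℕ) : ℕ × ℕ := (colOf π v, rowOf π v)

/-- The composition `α_π = (|{v ∈ [n] : row_π(v) = j}|)_{j=1}^{|C_{π,1}|}` (here `n = |π| - 1`). -/
def alphaOf (π : List ℕ) : List ℕ :=
  (List.range' 1 (colSeqAt π 1).length).map
    (fun j => ((Finset.Icc 1 (π.length - 1)).filter (fun v => rowOf π v = j)).card)

/-- Membership in the composition diagram `D(α) = {(i,j) : 1 ≤ j ≤ ℓ(α), 1 ≤ i ≤ α_j}`. -/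
def inDiagram (α : List ℕ) (p : ℕ × ℕ) : Prop :=
  1 ≤ p.1 ∧ 1 ≤ p.2 ∧ p.2 ≤ α.length ∧ p.1 ≤ α.getD (p.2 - 1) 0

instance inDiagramDec (α : List ℕ) : DecidablePred (inDiagram α) := fun p => by
  unfold inDiagram; infer_instance

/-- `D(α)` as a finite set. -/
def diagramFinset (α : List ℕ) : Finset (ℕ × ℕ) :=
  (Finset.range (α.foldr max 0 + 1) ×ˢ Finset.range (α.length + 1)).filter
    (fun p => inDiagram α p)

/-- `colpos_α(i,j) = |{(i,j') ∈ D(α) : j' < j} ∪ {(i,0)}|`. -/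
def colposA (α : List ℕ) (p : ℕ × ℕ) : ℕ :=
  (((Finset.range p.2).filter (fun j' => inDiagram α (p.1, j'))) ∪ {0}).card

/-- `leftof_α(i,j) = (i-1,j)`. -/
def leftA (p : ℕ × ℕ) : ℕ × ℕ := (p.1 - 1, p.2)

/-- `upof_α(i,j) = (i, max({j' < j : (i,j') ∈ D(α)} ∪ {0}))`. -/
def upA (α : List ℕ) (p : ℕ × ℕ) : ℕ × ℕ :=
  (p.1, (((Finset.range p.2).filter (fun j' => inDiagram α (p.1, j'))) ∪ {0}).sup id)

/-- The hook length `h_α(i,j)`. -/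
def hook (α : List ℕ) (p : ℕ × ℕ) : ℕ :=
  if 1 < p.1 then
    ((diagramFinset α).filter (fun q =>
      q.1 ≤ p.1 - 1 ∧ (upA α (p.1 - 1, p.2)).2 < q.2 ∧ q.2 ≤ p.2)).card
  else 1

/-- The segment `B_{π,T}(i,j,k)` of `s^{k-1}(π)`, where `U = T⁻¹`. -/
def Bseg (π : List ℕ) (α : List ℕ) (U : ℕ × ℕ → ℕ) (i j k : ℕ) : List ℕ :=
  if (upA α (leftA (i, j))).2 > 0 then
    ((ss^[k-1] π).take ((ss^[k-1] π).idxOf (U (k, j)) + 1)).drop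
      ((ss^[k-1] π).idxOf (U (k, (upA α (leftA (i, j))).2)) + 1)
  else
    (ss^[k-1] π).take ((ss^[k-1] π).idxOf (U (k, j)) + 1)

/-- The inverse `T_π⁻¹` of the stack-sorting tableau. -/
def invTmap (π : List ℕ) : ℕ × ℕ → ℕ :=
  Function.invFunOn (Tmap π) (Set.Icc 1 (π.length - 1))

/-- A linear extension of `D(α)`, encoded as the list `[T(1), …, T(n)]`:
`T` is a bijection `{1,…,n} → D(α)` with `T(a) ≥_D T(b) → a ≥ b`. -/
def isLinExt (α : List ℕ) (ℓ : List (ℕ × ℕ)) : Prop :=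
  ℓ.Nodup ∧ (∀ p, p ∈ ℓ ↔ inDiagram α p) ∧
  ∀ a b, a < ℓ.length → b < ℓ.length →
    (ℓ.getD a (0, 0)).1 ≤ (ℓ.getD b (0, 0)).1 ∧ (ℓ.getD a (0, 0)).2 ≤ (ℓ.getD b (0, 0)).2 →
    b ≤ a
end

/-!
Write `s^k(π) = P 0 T`; as `0` is the last entry of `π`, `T` stays increasing for every `k`.
Split `P = b₁ c₁ b₂ c₂ ⋯ b_m c_m` at its right-to-left maxima `c_j` (the column entries). One
stack-sorting step gives `s(P 0 T) = s(b₁) ⋯ s(b_m) 0 Z` with `Z` increasing: the `c_j` and the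
entries of `T` all pass `0`. So the next prefix before `0` is the concatenation of the sorted
blocks `s(b_j)`, each ending with its maximum, and a right-to-left maximum of such a
concatenation can only be the last entry of a piece, i.e. a block maximum.
-/

theorem List.dropWhile_ne_eq_cons_of_mem {α : Type*} [DecidableEq α] {a : α} {l : List α}
    (h : a ∈ l) : l.dropWhile (· ≠ a) = a :: (l.dropWhile (· ≠ a)).tail := by
  induction l with
  | nil => simp at h
  | cons b l ih =>
    by_cases hb : b = a
    · simp [hb]
    · rw [List.dropWhile_cons_of_pos (by simpa using hb)]
      exact ih ((List.mem_cons.1 h).resolve_left (Ne.symm hb))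

theorem le_foldr_max {x : ℕ} {l : List ℕ} (h : x ∈ l) : x ≤ l.foldr max 0 :=
  List.le_max_of_le' 0 h le_rfl

theorem foldr_max_append_cons {l r : List ℕ} {m : ℕ} (h : ∀ x ∈ l ++ r, x ≤ m) :
    (l ++ m :: r).foldr max 0 = m := by
  refine le_antisymm (List.max_le_of_forall_le _ _ fun x hx => ?_) (le_foldr_max (by simp))
  rcases List.mem_append.1 hx with hx | hx | ⟨_, hx⟩
  exacts [h x (List.mem_append_left r hx), le_rfl, h x (List.mem_append_right l hx)]

theorem ss_nil : ss [] = [] := by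
  rw [ss]

open List in
theorem ss_perm (l : List ℕ) : (ss l).Perm l := by
  match l with
  | [] => rw [ss_nil]
  | x :: xs =>
    rw [ss, List.drop_one]
    set m := (x :: xs).foldr max 0
    set tw := (x :: xs).takeWhile (· ≠ m)
    set dw := (x :: xs).dropWhile (· ≠ m)
    have hdw : dw = m :: dw.tail := List.dropWhile_ne_eq_cons_of_mem (foldrMaxMem x xs)
    calc (ss tw ++ ss dw.tail ++ [m]).Perm (tw ++ dw.tail ++ [m]) :=
          ((ss_perm tw).append (ss_perm dw.tail)).append_right _
      _ = tw ++ (dw.tail ++ [m]) := List.append_assoc ..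
      _ ~ tw ++ (m :: dw.tail) := List.perm_append_singleton .. |>.append_left tw
      _ = x :: xs := by rw [← hdw, List.takeWhile_append_dropWhile]
termination_by l.length
decreasing_by
  · exact takeWhileLt _ _ (foldrMaxMem _ _)
  · simpa only [List.drop_one] using dropWhileDropLt (x :: xs) _ (List.cons_ne_nil x xs)

theorem ss_append_cons {l r : List ℕ} {m : ℕ} (h : ∀ x ∈ l ++ r, x < m) :
    ss (l ++ m :: r) = ss l ++ ss r ++ [m] := by
  have hmax : (l ++ m :: r).foldr max 0 = m := foldr_max_append_cons fun x hx => (h x hx).le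
  have hl : ∀ x ∈ l, decide (x ≠ m) = true := fun x hx => by
    simpa using (h x (List.mem_append_left r hx)).ne
  obtain ⟨y, ys, hy⟩ : ∃ y ys, l ++ m :: r = y :: ys := List.exists_cons_of_ne_nil (by simp)
  rw [hy, ss, ← hy, hmax, List.takeWhile_append_of_pos hl, List.dropWhile_append_of_pos hl]
  simp

theorem ss_eq_self_of_pairwise_lt {l : List ℕ} (hl : l.Pairwise (· < ·)) : ss l = l := by
  induction l using List.reverseRecOn with
  | nil => exact ss_nil
  | append_singleton l m ih =>
    rw [List.pairwise_append] at hl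
    rw [ss_append_cons (by simpa using fun x hx => hl.2.2 x hx m (List.mem_singleton_self m)),
      ih hl.1, ss_nil, List.append_nil]

theorem getLastD_ss (l : List ℕ) : (ss l).getLastD 0 = l.foldr max 0 := by
  cases l with
  | nil => simp [ss_nil]
  | cons x xs => rw [ss]; exact List.getLastD_concat

theorem ss_iterate_perm (l : List ℕ) (k : ℕ) : (ss^[k] l).Perm l := by
  induction k with
  | zero => rfl
  | succ k ih => rw [Function.iterate_succ_apply']; exact (ss_perm _).trans ih

theorem rtlMax_append_cons_of_le {q r : List ℕ} {m : ℕ} (h : ∀ x ∈ q, x ≤ m) :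
    rtlMax (q ++ m :: r) = rtlMax (m :: r) := by
  induction q with
  | nil => rfl
  | cons a q ih =>
    have ha : ¬ ∀ y ∈ q ++ m :: r, y < a := fun hy =>
      (h a List.mem_cons_self).not_gt (hy m (by simp))
    rw [List.cons_append, rtlMax, if_neg ha, ih fun x hx => h x (List.mem_cons_of_mem a hx)]

theorem rtlMax_flatten_sublist :
    ∀ qs : List (List ℕ), (∀ q ∈ qs, ∀ x ∈ q, x ≤ q.getLastD 0) →
      (rtlMax qs.flatten).Sublist (qs.map (·.getLastD 0))
  | [], _ => by simp [rtlMax]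
  | q :: qs, h => by
    have ih := rtlMax_flatten_sublist qs fun q hq => h q (List.mem_cons_of_mem _ hq)
    rcases q.eq_nil_or_concat' with rfl | ⟨q, m, rfl⟩
    · exact ih.cons _
    · have hq : ∀ x ∈ q, x ≤ m := fun x hx => by
        simpa using h _ List.mem_cons_self x (List.mem_append_left _ hx)
      rw [List.flatten_cons, List.append_assoc, List.singleton_append,
        rtlMax_append_cons_of_le hq, List.map_cons, List.getLastD_concat, rtlMax]
      split
      · exact ih.cons_cons m
      · exact ih.cons m

theorem rtlMax_flatten_map_ss_sublist (bs : List (List ℕ)) :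
    (rtlMax (bs.map ss).flatten).Sublist (bs.map (·.foldr max 0)) := by
  have h := rtlMax_flatten_sublist (bs.map ss) <| by
    simp only [List.mem_map, forall_exists_index, and_imp]
    rintro _ b - rfl x hx
    rw [getLastD_ss]
    exact le_foldr_max ((ss_perm b).subset hx)
  simpa only [List.map_map, Function.comp_def, getLastD_ss] using h

theorem flatten_blocksOf_sublist : ∀ l : List ℕ, (blocksOf l).flatten.Sublist l
  | [] => by simp [blocksOf]
  | x :: xs => by
    have ih := flatten_blocksOf_sublist xs
    rw [blocksOf]
    split
    · exact ih.cons x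
    · split
      · simp
      · rename_i h
        rw [h] at ih
        exact ih.cons_cons x

theorem flatten_map_ss_blocksOf_subset (l : List ℕ) : ((blocksOf l).map ss).flatten ⊆ l := by
  intro x hx
  simp only [List.mem_flatten, List.mem_map] at hx
  obtain ⟨_, ⟨b, hb, rfl⟩, hxb⟩ := hx
  exact (flatten_blocksOf_sublist l).subset
    (List.mem_flatten.2 ⟨b, hb, (ss_perm b).subset hxb⟩)

theorem blocksOf_append_cons {b r : List ℕ} {c : ℕ} (hb : ∀ x ∈ b, x < c)
    (hr : ∀ x ∈ r, x < c) : blocksOf (b ++ c :: r) = b :: blocksOf r := by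
  induction b with
  | nil => rw [List.nil_append, blocksOf, if_pos hr]
  | cons a b ih =>
    have ha : ¬ ∀ y ∈ b ++ c :: r, y < a := fun hy =>
      (hb a List.mem_cons_self).not_gt (hy c (by simp))
    rw [List.cons_append, blocksOf, if_neg ha, ih fun x hx => hb x (List.mem_cons_of_mem a hx)]

theorem exists_eq_append_cons_max {l : List ℕ} (hne : l ≠ []) (hnd : l.Nodup) :
    ∃ b c r, l = b ++ c :: r ∧ ∀ x ∈ b ++ r, x < c := by
  obtain ⟨x, xs, rfl⟩ := List.exists_cons_of_ne_nil hne
  obtain ⟨b, r, hl⟩ := List.append_of_mem (foldrMaxMem x xs)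
  refine ⟨b, _, r, hl, fun y hy => (le_foldr_max ?_).lt_of_ne ?_⟩
  · rw [hl]; rcases List.mem_append.1 hy with hy | hy <;> simp [hy]
  · rintro rfl
    rw [hl, List.nodup_middle, List.nodup_cons] at hnd
    exact hnd.1 hy

def BlockForm (P T : List ℕ) : Prop :=
  ∃ Z, ss (P ++ 0 :: T) = ((blocksOf P).map ss).flatten ++ 0 :: Z ∧
    Z.Pairwise (· < ·) ∧ Z ⊆ P ++ T

theorem blockForm_nil {T : List ℕ} (hT : (0 :: T).Pairwise (· < ·)) : BlockForm [] T :=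
  ⟨_, by simp [ss_eq_self_of_pairwise_lt hT, blocksOf], (List.pairwise_cons.1 hT).2, by simp⟩

theorem BlockForm.append_cons {r T : List ℕ} (h : BlockForm r T) {b : List ℕ} {c : ℕ}
    (hb : ∀ x ∈ b, x < c) (hr : ∀ x ∈ r, x < c) (hT : ∀ x ∈ T, x < c) (hc : 0 < c) :
    BlockForm (b ++ c :: r) T := by
  obtain ⟨Z, hss, hZ, hZsub⟩ := h
  have hZc : ∀ x ∈ Z, x < c := fun x hx => (List.mem_append.1 (hZsub hx)).elim (hr x) (hT x)
  refine ⟨Z ++ [c], ?_, List.pairwise_append.2 ⟨hZ, by simp, by simpa using hZc⟩, ?_⟩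
  · have hlt : ∀ x ∈ b ++ (r ++ 0 :: T), x < c := by
      simp only [List.mem_append, List.mem_cons]
      rintro x (hx | hx | rfl | hx)
      exacts [hb x hx, hr x hx, hc, hT x hx]
    rw [List.append_assoc, List.cons_append, ss_append_cons hlt, hss, blocksOf_append_cons hb hr]
    simp
  · intro x hx
    rcases List.mem_append.1 hx with hx | hx
    · rcases List.mem_append.1 (hZsub hx) with hx | hx <;> simp [hx]
    · simp [List.mem_singleton.1 hx]

theorem BlockForm.append_singleton {P T : List ℕ} (h : BlockForm P T) {t : ℕ}
    (hP : ∀ x ∈ P, x < t) (hT : ∀ x ∈ T, x < t) (ht : 0 < t) : BlockForm P (T ++ [t]) := by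
  obtain ⟨Z, hss, hZ, hZsub⟩ := h
  have hZt : ∀ x ∈ Z, x < t := fun x hx => (List.mem_append.1 (hZsub hx)).elim (hP x) (hT x)
  refine ⟨Z ++ [t], ?_, List.pairwise_append.2 ⟨hZ, by simp, by simpa using hZt⟩, ?_⟩
  · have hlt : ∀ x ∈ (P ++ 0 :: T) ++ [], x < t := by
      simp only [List.append_nil, List.mem_append, List.mem_cons]
      rintro x (hx | rfl | hx)
      exacts [hP x hx, ht, hT x hx]
    rw [show P ++ 0 :: (T ++ [t]) = (P ++ 0 :: T) ++ t :: [] by simp, ss_append_cons hlt, hss,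
      ss_nil]
    simp
  · intro x hx
    rcases List.mem_append.1 hx with hx | hx
    · rcases List.mem_append.1 (hZsub hx) with hx | hx <;> simp [hx]
    · simp [List.mem_singleton.1 hx]

theorem blockForm_of_nodup (P T : List ℕ) (hnd : (P ++ 0 :: T).Nodup) (hP : 0 ∉ P)
    (hT : T.Pairwise (· < ·)) : BlockForm P T := by
  have hT0 : 0 ∉ T := (List.nodup_middle.1 hnd |> List.nodup_cons.1).1 ∘ List.mem_append_right P
  rcases eq_or_ne P [] with rfl | hPne
  · exact blockForm_nil (List.pairwise_cons.2
      ⟨fun x hx => Nat.pos_of_ne_zero (ne_of_mem_of_not_mem hx hT0), hT⟩)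
  obtain ⟨b, c, r, hbcr, hc⟩ := exists_eq_append_cons_max hPne (List.nodup_append.1 hnd).1
  have hcP : c ∈ P := hbcr ▸ List.mem_append_cons_self
  have hc0 : 0 < c := Nat.pos_of_ne_zero (ne_of_mem_of_not_mem hcP hP)
  -- `s` first moves the largest entry, `c` or the last entry of `T`, to the end.
  by_cases hTc : ∀ x ∈ T, x < c
  · subst hbcr
    have hr : BlockForm r T := blockForm_of_nodup r T (hnd.sublist (by simp))
      (fun h => hP (by simp [h])) hT
    exact hr.append_cons (fun x hx => hc x (List.mem_append_left r hx))
      (fun x hx => hc x (List.mem_append_right b hx)) hTc hc0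
  · obtain ⟨x, hxT, hcx⟩ : ∃ x ∈ T, c ≤ x := by simpa using hTc
    obtain ⟨T, t, rfl⟩ := (List.eq_nil_or_concat' T).resolve_left (List.ne_nil_of_mem hxT)
    rw [List.pairwise_append] at hT
    have hTt : ∀ y ∈ T, y < t := fun y hy => hT.2.2 y hy t (List.mem_singleton_self t)
    have hct : c < t := by
      refine (hcx.trans ?_).lt_of_ne fun hct => ?_
      · rcases List.mem_append.1 hxT with hx | hx
        exacts [(hTt x hx).le, (List.mem_singleton.1 hx).le]
      · exact List.disjoint_of_nodup_append hnd hcP (by simp [hct])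
    have hPt : ∀ y ∈ P, y < t := by
      rw [hbcr]
      simp only [List.mem_append, List.mem_cons]
      rintro y (hy | rfl | hy)
      exacts [(hc y (List.mem_append_left r hy)).trans hct, hct,
        (hc y (List.mem_append_right b hy)).trans hct]
    exact (blockForm_of_nodup P T (hnd.sublist (by simp)) hP hT.1).append_singleton hPt hTt
      (hc0.trans hct)
termination_by P.length + T.length

theorem exists_iterate_ss_eq_append_zero_cons {π : List ℕ} (hnd : π.Nodup)
    (h0 : π.getLast? = some 0) (k : ℕ) :
    ∃ P T, ss^[k] π = P ++ 0 :: T ∧ 0 ∉ P ∧ T.Pairwise (· < ·) := by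
  induction k with
  | zero =>
    obtain ⟨P, rfl⟩ := List.getLast?_eq_some_iff.1 h0
    exact ⟨P, [], rfl, fun h => List.disjoint_of_nodup_append hnd h (List.mem_singleton_self 0),
      List.Pairwise.nil⟩
  | succ k ih =>
    obtain ⟨P, T, hPT, hP, hT⟩ := ih
    obtain ⟨Z, hss, hZ, -⟩ := blockForm_of_nodup P T
      (hPT ▸ (ss_iterate_perm π k).nodup_iff.2 hnd) hP hT
    exact ⟨_, Z, by rw [Function.iterate_succ_apply', hPT, hss],
      fun h => hP (flatten_map_ss_blocksOf_subset P h), hZ⟩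

theorem prefixAt_eq {π P T : List ℕ} {i : ℕ} (h : ss^[i - 1] π = P ++ 0 :: T) (hP : 0 ∉ P) :
    prefixAt π i = P := by
  have hP' : ∀ x ∈ P, decide (x ≠ 0) = true := fun x hx => by
    simpa using ne_of_mem_of_not_mem hx hP
  rw [prefixAt, h, List.takeWhile_append_of_pos hP']
  simp

theorem stmt_9_general (n : ℕ) (π : List ℕ) (hπ : π.Perm (List.range (n + 1)))
    (h0 : π.getLast? = some 0) (i : ℕ) (hi : 2 ≤ i) :
    (colSeqAt π i).Sublist ((blocksAt π (i - 1)).map (fun b => b.foldr max 0)) := by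
  have hnd : π.Nodup := hπ.nodup_iff.2 List.nodup_range
  obtain ⟨P, T, hPT, hP, hT⟩ := exists_iterate_ss_eq_append_zero_cons hnd h0 (i - 2)
  obtain ⟨Z, hss, -⟩ := blockForm_of_nodup P T
    (hPT ▸ (ss_iterate_perm π _).nodup_iff.2 hnd) hP hT
  have hprev : prefixAt π (i - 1) = P := prefixAt_eq (by rwa [show i - 1 - 1 = i - 2 by omega]) hP
  have hcur : prefixAt π i = ((blocksOf P).map ss).flatten := by
    refine prefixAt_eq (T := Z) ?_ fun h => hP (flatten_map_ss_blocksOf_subset P h)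
    rw [show i - 1 = i - 2 + 1 by omega, Function.iterate_succ_apply', hPT, hss]
  rw [colSeqAt, blocksAt, hcur, hprev]
  exact rtlMax_flatten_map_ss_sublist (blocksOf P)

/-- Corollary 3.5: for `2 ≤ i ≤ met(π)`, `C_{π,i}` is a subsequence of the sequence of
block maxima `(max(b_{π,i-1,j}))_j`. -/
theorem stmt_9 (n : ℕ) (π : List ℕ) (hπ : π.Perm (List.range (n + 1)))
    (h0 : π.getLast? = some 0) (i : ℕ) (hi : 2 ≤ i) (him : i ≤ met π) :
    (colSeqAt π i).Sublist ((blocksAt π (i - 1)).map (fun b => b.foldr max 0)) :=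
  stmt_9_general n π hπ h0 i hi
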